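/- arXiv:math/0611633 — 7 statements merged into one kernel-verified Lean document; each statement's English description precedes it below -/
import Mathlib

section
/- Let r > 0 and n a positive integer. If f : [-r, 0] → ℂ is absolutely continuous, then the function h : [-r^n, 0] → ℂ defined by h(t) = f(-|t|^{1/n}) is absolutely continuous on [-r^n, 0]. -/
open Finset

/-- `f` is absolutely continuous on the interval `[a,b]`. -/
def ACOn (f : ℝ → ℂ) (a b : ℝ) : Prop :=
  ∀ ε > 0, ∃ δ > 0, ∀ (N : ℕ) (u v : Fin N → ℝ),
    (∀ i, a ≤ u i ∧ u i ≤ v i ∧ v i ≤ b) →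
    (Pairwise fun i j => Disjoint (Set.Ioo (u i) (v i)) (Set.Ioo (u j) (v j))) →
    (∑ i, (v i - u i)) < δ → (∑ i, ‖f (v i) - f (u i)‖) < ε

/-!
The map `φ t = -|t|^{1/n}` is monotone on `[-r^n, 0]` and sends it onto `[-r, 0]`, so it carries
disjoint subintervals to disjoint subintervals and `f ∘ φ` inherits absolute continuity from `f`
as soon as `φ` itself is absolutely continuous. For `φ`, split every interval at a point `m < 0`
close to `0`: on `[-r^n, m]` the map is smooth, hence Lipschitz, while the pieces in `[m, 0]` have
disjoint images in `[φ m, 0]`, whose total length is at most `-φ m`, small by continuity at `0`.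
-/

open Set Filter MeasureTheory

theorem MonotoneOn.disjoint_Ioo_image {α β : Type*} [LinearOrder α] [DenselyOrdered α]
    [LinearOrder β] [DenselyOrdered β] {φ : α → β} {s : Set α} (hφ : MonotoneOn φ s)
    {a₁ b₁ a₂ b₂ : α} (ha₁ : a₁ ∈ s) (hb₁ : b₁ ∈ s) (ha₂ : a₂ ∈ s) (hb₂ : b₂ ∈ s)
    (h : Disjoint (Ioo a₁ b₁) (Ioo a₂ b₂)) :
    Disjoint (Ioo (φ a₁) (φ b₁)) (Ioo (φ a₂) (φ b₂)) := by
  rw [Ioo_disjoint_Ioo] at h ⊢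
  rw [← hφ.map_min hb₁ hb₂, ← hφ.map_max ha₁ ha₂]
  exact hφ (min_rec' s hb₁ hb₂) (max_rec' s ha₁ ha₂) h

theorem sum_sub_le_of_pairwise_disjoint_Ioo {ι : Type*} [Fintype ι] {u v : ι → ℝ} {c d : ℝ}
    (hcd : c ≤ d) (huv : ∀ i, c ≤ u i ∧ u i ≤ v i ∧ v i ≤ d)
    (hdisj : Pairwise fun i j => Disjoint (Ioo (u i) (v i)) (Ioo (u j) (v j))) :
    ∑ i, (v i - u i) ≤ d - c := by
  have hvol : volume (⋃ i ∈ Finset.univ, Ioo (u i) (v i)) = ∑ i, ENNReal.ofReal (v i - u i) := by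
    rw [measure_biUnion_finset (fun i _ j _ hij => hdisj hij) fun i _ => measurableSet_Ioo]
    simp only [Real.volume_Ioo]
  have hsub : (⋃ i ∈ Finset.univ, Ioo (u i) (v i)) ⊆ Icc c d :=
    iUnion₂_subset fun i _ => Ioo_subset_Icc_self.trans (Icc_subset_Icc (huv i).1 (huv i).2.2)
  rw [← ENNReal.ofReal_le_ofReal_iff (sub_nonneg.2 hcd),
    ENNReal.ofReal_sum_of_nonneg fun i _ => sub_nonneg.2 (huv i).2.1, ← hvol, ← Real.volume_Icc]
  exact measure_mono hsub

theorem MonotoneOn.sum_sub_le {φ : ℝ → ℝ} {a b : ℝ} (hφ : MonotoneOn φ (Icc a b)) (hab : a ≤ b)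
    {ι : Type*} [Fintype ι] {u v : ι → ℝ} (huv : ∀ i, a ≤ u i ∧ u i ≤ v i ∧ v i ≤ b)
    (hdisj : Pairwise fun i j => Disjoint (Ioo (u i) (v i)) (Ioo (u j) (v j))) :
    ∑ i, (φ (v i) - φ (u i)) ≤ φ b - φ a := by
  have hu i : u i ∈ Icc a b := ⟨(huv i).1, (huv i).2.1.trans (huv i).2.2⟩
  have hv i : v i ∈ Icc a b := ⟨(huv i).1.trans (huv i).2.1, (huv i).2.2⟩
  refine sum_sub_le_of_pairwise_disjoint_Ioo (hφ (left_mem_Icc.2 hab) (right_mem_Icc.2 hab) hab)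
    (fun i => ⟨hφ (left_mem_Icc.2 hab) (hu i) (huv i).1, hφ (hu i) (hv i) (huv i).2.1,
      hφ (hv i) (right_mem_Icc.2 hab) (huv i).2.2⟩)
    fun i j hij => hφ.disjoint_Ioo_image (hu i) (hv i) (hu j) (hv j) (hdisj hij)

theorem Complex.norm_ofReal_sub_ofReal_of_le {x y : ℝ} (h : x ≤ y) : ‖(y : ℂ) - x‖ = y - x := by
  rw [← Complex.ofReal_sub, Complex.norm_real, Real.norm_of_nonneg (sub_nonneg.2 h)]

theorem MonotoneOn.sum_sub_le_add_mul {φ : ℝ → ℝ} {a m b : ℝ} (hmono : MonotoneOn φ (Icc a b))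
    (ham : a ≤ m) (hmb : m ≤ b) {K : NNReal} (hK : LipschitzOnWith K φ (Icc a m))
    {ι : Type*} [Fintype ι] {u v : ι → ℝ} (huv : ∀ i, a ≤ u i ∧ u i ≤ v i ∧ v i ≤ b)
    (hdisj : Pairwise fun i j => Disjoint (Ioo (u i) (v i)) (Ioo (u j) (v j))) :
    ∑ i, (φ (v i) - φ (u i)) ≤ (φ b - φ m) + K * ∑ i, (v i - u i) := by
  have hsplit x : φ (max x m) + φ (min x m) = φ x + φ m := by
    rcases le_total x m with h | h <;> simp [h, add_comm]
  have hupper : ∑ i, (φ (max (v i) m) - φ (max (u i) m)) ≤ φ b - φ m :=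
    (hmono.mono (Icc_subset_Icc_left ham)).sum_sub_le hmb
      (fun i => ⟨le_max_right _ _, max_le_max_right m (huv i).2.1, max_le (huv i).2.2 hmb⟩)
      fun i j hij => ((monotone_id.max monotone_const).monotoneOn univ).disjoint_Ioo_image
        trivial trivial trivial trivial (hdisj hij)
  have hlower i : φ (min (v i) m) - φ (min (u i) m) ≤ K * (v i - u i) := by
    have hmem x : a ≤ x → min x m ∈ Icc a m := fun hx => ⟨le_min hx ham, min_le_right _ _⟩
    calc φ (min (v i) m) - φ (min (u i) m)
        ≤ K * |min (v i) m - min (u i) m| :=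
          (le_abs_self _).trans (hK.dist_le_mul _ (hmem _ ((huv i).1.trans (huv i).2.1)) _
            (hmem _ (huv i).1))
      _ ≤ K * (v i - u i) := by
          gcongr
          simpa only [sub_self, abs_zero, max_eq_left (sub_nonneg.2 (huv i).2.1),
            abs_of_nonneg (sub_nonneg.2 (huv i).2.1)] using abs_min_sub_min_le_max (v i) m (u i) m
  calc ∑ i, (φ (v i) - φ (u i))
      = ∑ i, (φ (max (v i) m) - φ (max (u i) m)) +
          ∑ i, (φ (min (v i) m) - φ (min (u i) m)) := by
        rw [← Finset.sum_add_distrib]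
        exact Finset.sum_congr rfl fun i _ => by linarith [hsplit (u i), hsplit (v i)]
    _ ≤ (φ b - φ m) + K * ∑ i, (v i - u i) := by
        rw [Finset.mul_sum]
        exact add_le_add hupper (Finset.sum_le_sum fun i _ => hlower i)

theorem MonotoneOn.acOn_of_lipschitzOnWith {φ : ℝ → ℝ} {a b : ℝ} (hab : a < b)
    (hmono : MonotoneOn φ (Icc a b)) (hcont : ContinuousWithinAt φ (Iio b) b)
    (hlip : ∀ m < b, ∃ K, LipschitzOnWith K φ (Icc a m)) :
    ACOn (fun t => (φ t : ℂ)) a b := by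
  intro ε hε
  obtain ⟨m, ⟨ham, hmb⟩, hφm⟩ : ∃ m ∈ Ioo a b, φ b - ε / 2 < φ m :=
    ((eventually_mem_set.2 (Ioo_mem_nhdsLT hab)).and
      ((tendsto_order.1 hcont).1 _ (by linarith))).exists
  obtain ⟨K, hK⟩ := hlip m hmb
  refine ⟨ε / 2 / (K + 1), by positivity, fun N u v huv hdisj hsum => ?_⟩
  have hu i : u i ∈ Icc a b := ⟨(huv i).1, (huv i).2.1.trans (huv i).2.2⟩
  have hv i : v i ∈ Icc a b := ⟨(huv i).1.trans (huv i).2.1, (huv i).2.2⟩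
  simp only [Complex.norm_ofReal_sub_ofReal_of_le (hmono (hu _) (hv _) (huv _).2.1)]
  calc ∑ i, (φ (v i) - φ (u i))
      ≤ (φ b - φ m) + (K + 1 : NNReal) * ∑ i, (v i - u i) :=
        hmono.sum_sub_le_add_mul ham.le hmb.le (hK.weaken le_self_add) huv hdisj
    _ < ε / 2 + (K + 1) * (ε / 2 / (K + 1)) := by push_cast; gcongr; linarith
    _ = ε := by field_simp; ring

theorem ACOn.comp_monotoneOn {f : ℝ → ℂ} {c d : ℝ} (hf : ACOn f c d) {φ : ℝ → ℝ} {a b : ℝ}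
    (hφ : ACOn (fun t => (φ t : ℂ)) a b) (hmono : MonotoneOn φ (Icc a b))
    (hmaps : MapsTo φ (Icc a b) (Icc c d)) :
    ACOn (fun t => f (φ t)) a b := by
  intro ε hε
  obtain ⟨δ, hδ, hfδ⟩ := hf ε hε
  obtain ⟨η, hη, hφη⟩ := hφ δ hδ
  refine ⟨η, hη, fun N u v huv hdisj hsum => ?_⟩
  have hu i : u i ∈ Icc a b := ⟨(huv i).1, (huv i).2.1.trans (huv i).2.2⟩
  have hv i : v i ∈ Icc a b := ⟨(huv i).1.trans (huv i).2.1, (huv i).2.2⟩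
  refine hfδ N (fun i => φ (u i)) (fun i => φ (v i))
    (fun i => ⟨(hmaps (hu i)).1, hmono (hu i) (hv i) (huv i).2.1, (hmaps (hv i)).2⟩)
    (fun i j hij => hmono.disjoint_Ioo_image (hu i) (hv i) (hu j) (hv j) (hdisj hij)) ?_
  simpa only [Complex.norm_ofReal_sub_ofReal_of_le (hmono (hu _) (hv _) (huv _).2.1)]
    using hφη N u v huv hdisj hsum

theorem monotoneOn_neg_abs_rpow {p : ℝ} (hp : 0 ≤ p) :
    MonotoneOn (fun t : ℝ => -(|t| ^ p)) (Iic 0) := by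
  intro x hx y hy hxy
  simp only [neg_le_neg_iff]
  have habs : |y| ≤ |x| := by
    rw [abs_of_nonpos (mem_Iic.1 hx), abs_of_nonpos hy]
    linarith
  exact Real.rpow_le_rpow (abs_nonneg y) habs hp

theorem exists_lipschitzOnWith_neg_abs_rpow (p : ℝ) {a m : ℝ} (hm : m < 0) :
    ∃ K, LipschitzOnWith K (fun t : ℝ => -(|t| ^ p)) (Icc a m) := by
  refine ContDiffOn.exists_lipschitzOnWith (n := 1) (fun t ht => ?_) one_ne_zero
    (convex_Icc a m) isCompact_Icc
  have ht0 : t ≠ 0 := (ht.2.trans_lt hm).ne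
  exact ((Real.contDiffAt_rpow_const_of_ne (abs_ne_zero.2 ht0)).comp t
    (contDiffAt_abs ht0)).neg.contDiffWithinAt

/-- If `f ∈ AC([-r,0])` then `h(t) = f(-|t|^{1/n})` belongs to `AC([-r^n, 0])`. -/
theorem stmt2 (r : ℝ) (hr : 0 < r) (n : ℕ) (hn : 0 < n) (f : ℝ → ℂ)
    (hf : ACOn f (-r) 0) :
    ACOn (fun t => f (-(|t| ^ ((n : ℝ)⁻¹)))) (-(r ^ n)) 0 := by
  have hp : (0 : ℝ) ≤ (n : ℝ)⁻¹ := by positivity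
  have hrn : -(r ^ n) < 0 := neg_lt_zero.2 (pow_pos hr n)
  have hmono := (monotoneOn_neg_abs_rpow hp).mono (Icc_subset_Iic_self (a := -(r ^ n)))
  have hend : -(|-(r ^ n)| ^ (n : ℝ)⁻¹) = -r := by
    rw [abs_neg, abs_of_pos (pow_pos hr n), Real.pow_rpow_inv_natCast hr.le hn.ne']
  refine hf.comp_monotoneOn ?_ hmono fun t ht => ⟨?_, ?_⟩
  · exact hmono.acOn_of_lipschitzOnWith hrn
      (continuous_abs.rpow_const fun _ => Or.inr hp).neg.continuousWithinAt
      fun m hm => exists_lipschitzOnWith_neg_abs_rpow _ hm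
  · exact hend ▸ hmono (left_mem_Icc.2 hrn.le) ht ht.1
  · exact neg_nonpos.2 (Real.rpow_nonneg (abs_nonneg t) _)
end

section
/- Let I ⊆ ℝ be an interval and let a_1, ..., a_n : I → ℂ be continuous coefficients of the monic polynomial curve P(t)(z) = z^n + Σ_{j=1}^n (-1)^j a_j(t) z^{n-j}. Suppose μ_1, ..., μ_n : I → ℂ is a parameterization of the roots of P(t) (i.e., for each t, P(t)(z) = Π_j (z - μ_j(t))) in which each μ_i is Lipschitz with a common Lipschitz constant C. Then any continuous function λ : I → ℂ such that λ(t) is a root of P(t) for every t is Lipschitz with constant C. -/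
/-!
Near any point `x`, a continuous root `λ` can only run along branches `μ j` that pass through
`λ x`: the other branches stay a positive distance away from `λ` near `x`. Hence
`‖λ y - λ x‖ = ‖μ j y - μ j x‖ ≤ C * |y - x|` for `y` near `x`, and a local bound with a uniform
constant on an interval becomes a global one by the comparison principle for right slopes.
-/

open Finset Filter Set Topology

theorem ContinuousWithinAt.eventually_exists_branch_eq {ι X E : Type*} [Finite ι]
    [TopologicalSpace X] [TopologicalSpace E] [T2Space E]
    {f : X → E} {g : ι → X → E} {s : Set X} {x : X}
    (hf : ContinuousWithinAt f s x) (hg : ∀ i, ContinuousWithinAt (g i) s x)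
    (hfg : ∀ y ∈ s, ∃ i, f y = g i y) :
    ∀ᶠ y in 𝓝[s] x, ∃ i, g i x = f x ∧ f y = g i y := by
  have hsep : ∀ᶠ y in 𝓝[s] x, ∀ i, g i x ≠ f x → g i y ≠ f y := by
    refine eventually_all.2 fun i => ?_
    by_cases hi : g i x = f x
    · exact .of_forall fun _ h => absurd hi h
    · filter_upwards [((hg i).tendsto.prodMk_nhds hf.tendsto).eventually
        (isClosed_diagonal.isOpen_compl.mem_nhds hi)] with y hy _ using hy
  filter_upwards [hsep, self_mem_nhdsWithin] with y hy hys
  obtain ⟨i, hi⟩ := hfg y hys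
  exact ⟨i, not_imp_not.1 (hy i) hi.symm, hi⟩

theorem continuousWithinAt_of_norm_sub_le {E : Type*} [SeminormedAddCommGroup E]
    {g : ℝ → E} {s : Set ℝ} {x : ℝ} {C : ℝ}
    (h : ∀ y ∈ s, ‖g y - g x‖ ≤ C * |y - x|) : ContinuousWithinAt g s x := by
  rw [ContinuousWithinAt, tendsto_iff_norm_sub_tendsto_zero]
  have hcont : Continuous fun y => C * |y - x| := by fun_prop
  have hlim : Tendsto (fun y => C * |y - x|) (𝓝[s] x) (𝓝 0) := by
    simpa using (hcont.tendsto x).mono_left nhdsWithin_le_nhds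
  exact squeeze_zero' (Eventually.of_forall fun _ => norm_nonneg _)
    (eventually_nhdsWithin_of_forall h) hlim

theorem norm_sub_le_of_eventually_nhdsGT {E : Type*} [SeminormedAddCommGroup E]
    {f : ℝ → E} {a b C : ℝ} (hab : a ≤ b) (hf : ContinuousOn f (Icc a b))
    (hloc : ∀ x ∈ Ico a b, ∀ᶠ y in 𝓝[>] x, ‖f y - f x‖ ≤ C * (y - x)) :
    ‖f b - f a‖ ≤ C * (b - a) := by
  refine image_le_of_liminf_slope_right_le_deriv_boundary (f := fun y => ‖f y - f a‖)
    (B' := fun _ => C) ((hf.sub continuousOn_const).norm) (by simp)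
    (continuousOn_const.mul (continuousOn_id.sub continuousOn_const))
    (fun x _ => ((hasDerivWithinAt_id x _).sub_const a).const_mul C |>.congr_deriv (mul_one C))
    (fun x hx r hr => ?_) ⟨hab, le_rfl⟩
  refine Eventually.frequently ?_
  filter_upwards [hloc x hx, self_mem_nhdsWithin] with y hy hxy
  have hxy : 0 < y - x := sub_pos.2 hxy
  rw [slope_def_field, div_lt_iff₀ hxy]
  calc ‖f y - f a‖ - ‖f x - f a‖ ≤ ‖f y - f x‖ := by
        simpa using norm_sub_norm_le (f y - f a) (f x - f a)
    _ ≤ C * (y - x) := hy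
    _ < r * (y - x) := mul_lt_mul_of_pos_right hr hxy

theorem Set.OrdConnected.norm_sub_le_of_eventually_norm_sub_le {E : Type*}
    [SeminormedAddCommGroup E] {I : Set ℝ} (hI : I.OrdConnected) {f : ℝ → E} {C : ℝ}
    (hf : ContinuousOn f I) (hloc : ∀ x ∈ I, ∀ᶠ y in 𝓝[I] x, ‖f y - f x‖ ≤ C * |y - x|) :
    ∀ s ∈ I, ∀ t ∈ I, ‖f s - f t‖ ≤ C * |s - t| := by
  have of_le : ∀ s ∈ I, ∀ t ∈ I, s ≤ t → ‖f s - f t‖ ≤ C * |s - t| := by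
    intro s hs t ht hst
    rw [norm_sub_rev, abs_sub_comm, abs_of_nonneg (sub_nonneg.2 hst)]
    refine norm_sub_le_of_eventually_nhdsGT hst (hf.mono (hI.out hs ht)) fun x hx => ?_
    have hxI : x ∈ I := hI.out hs ht (Ico_subset_Icc_self hx)
    have hle : 𝓝[>] x ≤ 𝓝[I] x := by
      rw [← nhdsWithin_Ioo_eq_nhdsGT hx.2]
      exact nhdsWithin_mono _ fun y hy => hI.out hxI ht (Ioo_subset_Icc_self hy)
    filter_upwards [hle (hloc x hxI), self_mem_nhdsWithin] with y hy hxy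
    rwa [abs_of_pos (sub_pos.2 hxy)] at hy
  intro s hs t ht
  rcases le_total s t with hst | hts
  · exact of_le s hs t ht hst
  · rw [norm_sub_rev, abs_sub_comm]
    exact of_le t ht s hs hts

theorem stmt4_general (n : ℕ) (I : Set ℝ) (hI : I.OrdConnected)
    (a : Fin n → ℝ → ℂ)
    (μ : Fin n → ℝ → ℂ) (C : ℝ)
    (hroots : ∀ t ∈ I, ∀ z : ℂ,
      z ^ n + ∑ j : Fin n, (-1 : ℂ) ^ (j.1 + 1) * a j t * z ^ (n - 1 - j.1)
        = ∏ j : Fin n, (z - μ j t))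
    (hLip : ∀ j, ∀ s ∈ I, ∀ t ∈ I, ‖μ j s - μ j t‖ ≤ C * |s - t|)
    (lam : ℝ → ℂ) (hcont : ContinuousOn lam I)
    (hlam : ∀ t ∈ I,
      (lam t) ^ n + ∑ j : Fin n, (-1 : ℂ) ^ (j.1 + 1) * a j t * (lam t) ^ (n - 1 - j.1) = 0) :
    ∀ s ∈ I, ∀ t ∈ I, ‖lam s - lam t‖ ≤ C * |s - t| := by
  have hbranch : ∀ t ∈ I, ∃ j, lam t = μ j t := by
    intro t ht
    obtain ⟨j, -, hj⟩ := prod_eq_zero_iff.1 ((hroots t ht (lam t)).symm.trans (hlam t ht))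
    exact ⟨j, sub_eq_zero.1 hj⟩
  refine hI.norm_sub_le_of_eventually_norm_sub_le hcont fun x hx => ?_
  have hμ : ∀ j, ContinuousWithinAt (μ j) I x := fun j =>
    continuousWithinAt_of_norm_sub_le fun y hy => hLip j y hy x hx
  filter_upwards [(hcont x hx).eventually_exists_branch_eq hμ hbranch,
    self_mem_nhdsWithin] with y ⟨j, hjx, hjy⟩ hy
  rw [hjy, ← hjx]
  exact hLip j y hy x hx

/-- If the roots of the monic polynomial curve
`P(t)(z) = z^n + ∑_{j=1}^n (-1)^j a_j(t) z^{n-j}` (with continuous coefficients on the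
interval `I`) admit a parameterization `μ_1, …, μ_n` that is Lipschitz with common constant `C`,
then any continuous root `λ` of `P` is Lipschitz with constant `C`. -/
theorem stmt4 (n : ℕ) (I : Set ℝ) (hI : I.OrdConnected)
    (a : Fin n → ℝ → ℂ) (ha : ∀ j, ContinuousOn (a j) I)
    (μ : Fin n → ℝ → ℂ) (C : ℝ)
    (hroots : ∀ t ∈ I, ∀ z : ℂ,
      z ^ n + ∑ j : Fin n, (-1 : ℂ) ^ (j.1 + 1) * a j t * z ^ (n - 1 - j.1)
        = ∏ j : Fin n, (z - μ j t))
    (hLip : ∀ j, ∀ s ∈ I, ∀ t ∈ I, ‖μ j s - μ j t‖ ≤ C * |s - t|)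
    (lam : ℝ → ℂ) (hcont : ContinuousOn lam I)
    (hlam : ∀ t ∈ I,
      (lam t) ^ n + ∑ j : Fin n, (-1 : ℂ) ^ (j.1 + 1) * a j t * (lam t) ^ (n - 1 - j.1) = 0) :
    ∀ s ∈ I, ∀ t ∈ I, ‖lam s - lam t‖ ≤ C * |s - t| :=
  stmt4_general n I hI a μ C hroots hLip lam hcont hlam
end

section
/- For real or complex numbers λ_1, ..., λ_n, the determinant Δ_k of the k×k upper-left minor of the Bezoutiant matrix B = (s_{i+j-2})_{1≤i,j≤n}, where s_m = Σ_{j=1}^n λ_j^m are the Newton power sums (with s_0 = n), equals Σ_{i_1 < i_2 < ... < i_k} Π_{p < q} (λ_{i_p} - λ_{i_q})^2, where the sum is over all k-element subsets {i_1,...,i_k} of {1,...,n}. -/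
open Finset

/-- `Δ_k(λ) = ∑_{i_1 < ⋯ < i_k} ∏_{p<q} (λ_{i_p} - λ_{i_q})²`, the sum over all
`k`-element subsets of the indices. -/
noncomputable def delta (n k : ℕ) (lam : Fin n → ℂ) : ℂ :=
  ∑ S ∈ Finset.powersetCard k (Finset.univ : Finset (Fin n)),
    ∏ p ∈ S, ∏ q ∈ S.filter (fun q => p < q), (lam p - lam q) ^ 2

/-!
The minor is `B_k = V Vᵀ` for the `k × n` matrix `V = (λ_l ^ i)`. By the Cauchy–Binet formula,
`det (V Vᵀ)` is the sum over `k`-subsets `S` of the squares of the maximal minors `det V_S`, and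
each `V_S` is a transposed Vandermonde matrix, whose determinant is `∏_{p<q} (λ_q - λ_p)`.
-/

open Function Equiv

theorem Set.powersetCard.bijective_orderEmbOfFin_comp_perm {m : Type*} [LinearOrder m] {k : ℕ} :
    Bijective fun p : Set.powersetCard m k × Perm (Fin k) =>
      (⟨p.1.val.orderEmbOfFin (card_eq p.1) ∘ p.2,
        (RelEmbedding.injective _).comp p.2.injective⟩ : {f : Fin k → m // Injective f}) := by
  constructor
  · rintro ⟨S, σ⟩ ⟨T, τ⟩ h
    have hfun : S.val.orderEmbOfFin (card_eq S) ∘ σ = T.val.orderEmbOfFin (card_eq T) ∘ τ :=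
      congrArg Subtype.val h
    have hST : S = T := by
      apply Subtype.ext
      apply Finset.coe_injective
      calc (S.val : Set m) = Set.range (S.val.orderEmbOfFin (card_eq S) ∘ σ) := by
            rw [σ.surjective.range_comp, range_orderEmbOfFin]
        _ = Set.range (T.val.orderEmbOfFin (card_eq T) ∘ τ) := by rw [hfun]
        _ = T.val := by rw [τ.surjective.range_comp, range_orderEmbOfFin]
    subst hST
    simp only [Prod.mk.injEq, true_and]
    ext i
    exact congrArg Fin.val ((RelEmbedding.injective _) (congrFun hfun i))
  · rintro ⟨f, hf⟩
    set S : Set.powersetCard m k :=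
      ⟨Finset.univ.image f, by simp [Finset.card_image_of_injective _ hf]⟩
    have hmem : ∀ i, f i ∈ S.val := fun i => Finset.mem_image_of_mem f (Finset.mem_univ i)
    set σ : Fin k → Fin k := fun i => (S.val.orderIsoOfFin (card_eq S)).symm ⟨f i, hmem i⟩
    have hσ : Injective σ := fun i j hij => hf (by simpa [σ] using hij)
    refine ⟨⟨S, Equiv.ofBijective σ (Finite.injective_iff_bijective.mp hσ)⟩, ?_⟩
    ext i
    simp [σ, ← Finset.coe_orderIsoOfFin_apply]

theorem Finset.prod_prod_Ioi_orderEmbOfFin {α M : Type*} [LinearOrder α] [CommMonoid M]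
    (s : Finset α) {k : ℕ} (h : #s = k) (g : α → α → M) :
    ∏ i : Fin k, ∏ j ∈ Ioi i, g (s.orderEmbOfFin h i) (s.orderEmbOfFin h j)
      = ∏ p ∈ s, ∏ q ∈ s with p < q, g p q := by
  set e := s.orderEmbOfFin h
  have hfilter : ∀ i, {q ∈ s | e i < q} = (Ioi i).map e.toEmbedding := by
    intro i
    ext q
    simp only [mem_filter, mem_map, mem_Ioi]
    constructor
    · rintro ⟨hq, hlt⟩
      obtain ⟨j, rfl⟩ : q ∈ Set.range e := by rwa [range_orderEmbOfFin]
      exact ⟨j, e.lt_iff_lt.1 hlt, rfl⟩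
    · rintro ⟨j, hij, rfl⟩
      exact ⟨orderEmbOfFin_mem s h j, e.strictMono hij⟩
  calc ∏ i : Fin k, ∏ j ∈ Ioi i, g (e i) (e j)
      = ∏ i : Fin k, ∏ q ∈ s with e i < q, g (e i) q := by simp_rw [hfilter, prod_map]; rfl
    _ = ∏ p ∈ univ.map e.toEmbedding, ∏ q ∈ s with p < q, g p q :=
      (prod_map univ e.toEmbedding fun p => ∏ q ∈ s with p < q, g p q).symm
    _ = ∏ p ∈ s, ∏ q ∈ s with p < q, g p q := by rw [map_orderEmbOfFin_univ]

namespace Matrix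

variable {R : Type*} [CommRing R] {m : Type*} [Fintype m]

theorem det_mul_eq_sum_prod_mul_det_submatrix {ι : Type*} [Fintype ι] [DecidableEq ι]
    (A : Matrix ι m R) (B : Matrix m ι R) :
    (A * B).det = ∑ f : ι → m, (∏ i, A i (f i)) * (B.submatrix f id).det := by
  have hrows : A * B = fun i => ∑ l, A i l • B l := by
    ext i j; simp [mul_apply, Finset.sum_apply]
  change detRowAlternating (A * B) = _
  rw [hrows, ← AlternatingMap.coe_multilinearMap, MultilinearMap.map_sum]
  simp only [MultilinearMap.map_smul_univ, smul_eq_mul]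
  rfl

theorem det_mul_eq_sum_injective {ι : Type*} [Fintype ι] [DecidableEq ι] [DecidableEq m]
    (A : Matrix ι m R) (B : Matrix m ι R) :
    (A * B).det
      = ∑ f : {f : ι → m // Injective f}, (∏ i, A i (f.1 i)) * (B.submatrix f id).det := by
  rw [det_mul_eq_sum_prod_mul_det_submatrix, ← Finset.sum_filter_of_ne (p := Injective),
    Finset.sum_subtype (p := Injective) _ (fun _ => by simp)]
  intro f _ hf i j hij
  by_contra hne
  exact hf (by rw [det_zero_of_row_eq hne (by ext; simp [hij]), mul_zero])

theorem det_mul_eq_sum_powersetCard [LinearOrder m] {k : ℕ} (A : Matrix (Fin k) m R)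
    (B : Matrix m (Fin k) R) :
    (A * B).det = ∑ S : Set.powersetCard m k,
      (A.submatrix id (S.val.orderEmbOfFin (Set.powersetCard.card_eq S))).det *
        (B.submatrix (S.val.orderEmbOfFin (Set.powersetCard.card_eq S)) id).det := by
  rw [det_mul_eq_sum_injective, ← Fintype.sum_bijective _
    Set.powersetCard.bijective_orderEmbOfFin_comp_perm _ _ (fun _ => rfl), Fintype.sum_prod_type]
  refine Fintype.sum_congr _ _ fun S => ?_
  set e := S.val.orderEmbOfFin (Set.powersetCard.card_eq S)
  have hB : ∀ σ : Perm (Fin k),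
      (B.submatrix (e ∘ σ) id).det = Perm.sign σ * (B.submatrix e id).det :=
    fun σ => by rw [← det_permute, submatrix_submatrix]; rfl
  rw [← det_transpose (A.submatrix id e), det_apply' (A.submatrix id e)ᵀ, sum_mul]
  refine Fintype.sum_congr _ _ fun σ => ?_
  rw [hB]
  change (∏ i, A i (e (σ i))) * _ = (_ * ∏ i, A i (e (σ i))) * _
  ring

theorem det_vandermonde_sq {k : ℕ} (v : Fin k → R) :
    (vandermonde v).det ^ 2 = ∏ i, ∏ j ∈ Ioi i, (v i - v j) ^ 2 := by
  simp_rw [det_vandermonde, ← prod_pow, sub_sq_comm]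

end Matrix

theorem stmt5_general (n k : ℕ) (lam : Fin n → ℂ) :
    Matrix.det (Matrix.of fun i j : Fin k => ∑ l : Fin n, lam l ^ (i.1 + j.1))
      = delta n k lam := by
  set V : Matrix (Fin k) (Fin n) ℂ := Matrix.of fun i l => lam l ^ (i : ℕ)
  have hB : (Matrix.of fun i j : Fin k => ∑ l, lam l ^ (i.1 + j.1)) = V * V.transpose := by
    ext i j; simp [V, Matrix.mul_apply, pow_add]
  have hV : ∀ e : Fin k → Fin n, V.submatrix id e = (Matrix.vandermonde (lam ∘ e)).transpose :=
    fun e => rfl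
  rw [hB, Matrix.det_mul_eq_sum_powersetCard, delta,
    sum_subtype (p := (· ∈ Set.powersetCard (Fin n) k)) _ (by simp)]
  refine Fintype.sum_congr _ _ fun S => ?_
  rw [← Matrix.transpose_submatrix, Matrix.det_transpose, hV, Matrix.det_transpose, ← sq,
    Matrix.det_vandermonde_sq]
  exact prod_prod_Ioi_orderEmbOfFin S.val _ fun p q => (lam p - lam q) ^ 2

/-- The determinant of the `k×k` upper-left minor of the Bezoutiant `B = (s_{i+j-2})`
(where `s_m = ∑_j λ_j^m`, `s_0 = n`) equals `Σ_{i_1<⋯<i_k} Π_{p<q}(λ_{i_p}-λ_{i_q})²`. -/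
theorem stmt5 (n k : ℕ) (hk : k ≤ n) (lam : Fin n → ℂ) :
    Matrix.det (Matrix.of fun i j : Fin k => ∑ l : Fin n, lam l ^ (i.1 + j.1))
      = delta n k lam :=
  stmt5_general n k lam
end

section
/- Let f : ℝ → ℂ be a continuous function defined near 0, of class C^n, and suppose the multiplicity m(f) of f at 0 (the supremum of integers p such that f(t) = t^p g(t) near 0 for some continuous g) satisfies m(f) < n. Then there exists a C^{n - m(f)} function g defined near 0 with g(0) ≠ 0 and f(t) = t^{m(f)} g(t) near 0. -/
/-!
Hadamard's lemma: if `f` is `C^{k+1}` and `f 0 = 0`, then `f t = t • g t` with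
`g t = ∫₀¹ f'(s t) ds`, which is `C^k` by differentiation under the integral sign.
After replacing `f` by a globally `C^n` function that agrees with it near `0` (a bump function
cut-off), `m` applications of Hadamard's lemma give `f = t^m g` with `g` of class `C^{n-m}`; at
each step the quotient agrees with `t^j g₀` off `0`, hence also at `0` by continuity. If `g 0 = 0`,
one more application gives `f = t^{m+1} h` with `h` continuous, contradicting the maximality of `m`.
-/

open Filter Topology Set MeasureTheory Function

theorem ContDiffAt.exists_contDiff_eventuallyEq {E F : Type*} [NormedAddCommGroup E]
    [NormedSpace ℝ E] [HasContDiffBump E] [NormedAddCommGroup F] [NormedSpace ℝ F]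
    {f : E → F} {x : E} {n : ℕ} (hf : ContDiffAt ℝ n f x) :
    ∃ g : E → F, ContDiff ℝ n g ∧ g =ᶠ[𝓝 x] f := by
  obtain ⟨u, hu, hfu⟩ := hf.contDiffOn le_rfl (by simp)
  obtain ⟨r, hr, hru⟩ := Metric.mem_nhds_iff.1 hu
  let χ : ContDiffBump x := ⟨r / 4, r / 2, by positivity, by linarith⟩
  refine ⟨fun y => χ y • f y, contDiff_iff_contDiffAt.2 fun y => ?_, ?_⟩
  · by_cases hy : y ∈ Metric.ball x r
    · exact χ.contDiff.contDiffAt.smul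
        (hfu.contDiffAt (mem_of_superset (Metric.isOpen_ball.mem_nhds hy) hru))
    · have hχy : y ∉ tsupport χ := by
        rw [χ.tsupport_eq]
        exact fun h => hy (Metric.closedBall_subset_ball (by change r / 2 < r; linarith) h)
      refine contDiffAt_const (c := (0 : F)).congr_of_eventuallyEq ?_
      filter_upwards [notMem_tsupport_iff_eventuallyEq.1 hχy] with z hz
      simp [hz]
  · filter_upwards [Metric.ball_mem_nhds x (by positivity : 0 < r / 4)] with y hy
    rw [χ.one_of_mem_closedBall (Metric.ball_subset_closedBall hy), one_smul]

variable {E : Type*} [NormedAddCommGroup E] [NormedSpace ℝ E]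

theorem ContDiff.uncurry_deriv_fst {F : ℝ → ℝ → E} {k : ℕ} (hF : ContDiff ℝ (k + 1) (uncurry F)) :
    ContDiff ℝ k (uncurry fun x s => deriv (fun y => F y s) x) := by
  have h : (uncurry fun x s => deriv (fun y => F y s) x) =
      fun p => fderiv ℝ (uncurry F) p (1, 0) := by
    ext ⟨x, s⟩
    exact ((hF.differentiable (by simp) (x, s)).hasFDerivAt.comp_hasDerivAt x
      ((hasDerivAt_id x).prodMk (hasDerivAt_const x s))).deriv
  rw [h]
  exact (hF.fderiv_right le_rfl).clm_apply contDiff_const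

theorem hasDerivAt_parametric_intervalIntegral_of_contDiff [CompleteSpace E] {F : ℝ → ℝ → E}
    (hF : ContDiff ℝ 1 (uncurry F)) (a b x₀ : ℝ) :
    HasDerivAt (fun x => ∫ s in a..b, F x s) (∫ s in a..b, deriv (fun y => F y s) x₀) x₀ := by
  have hFc : Continuous (uncurry F) := hF.continuous
  have hF'c : Continuous (uncurry fun x s => deriv (fun y => F y s) x) :=
    (ContDiff.uncurry_deriv_fst (k := 0) (by simpa using hF)).continuous
  obtain ⟨M, hM⟩ := ((isCompact_closedBall x₀ 1).prod isCompact_uIcc).exists_bound_of_continuousOn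
    (hF'c.continuousOn (s := Metric.closedBall x₀ 1 ×ˢ uIcc a b))
  refine (intervalIntegral.hasDerivAt_integral_of_dominated_loc_of_deriv_le (μ := volume)
    (bound := fun _ => M) (F' := fun x s => deriv (fun y => F y s) x)
    (Metric.ball_mem_nhds x₀ one_pos) ?_ ?_ ?_ ?_ intervalIntegrable_const ?_).2
  · exact Eventually.of_forall fun x =>
      (hFc.comp (continuous_const.prodMk continuous_id)).aestronglyMeasurable
  · exact (hFc.comp (continuous_const.prodMk continuous_id)).intervalIntegrable _ _
  · exact (hF'c.comp (continuous_const.prodMk continuous_id)).aestronglyMeasurable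
  · exact ae_of_all _ fun s hs x hx =>
      hM (x, s) ⟨Metric.ball_subset_closedBall hx, uIoc_subset_uIcc hs⟩
  · refine ae_of_all _ fun s _ x _ => DifferentiableAt.hasDerivAt ?_
    exact (hF.differentiable one_ne_zero).comp
      (differentiable_id.prodMk (differentiable_const s)) x

theorem contDiff_parametric_intervalIntegral_of_contDiff [CompleteSpace E] {k : ℕ}
    {F : ℝ → ℝ → E} (hF : ContDiff ℝ k (uncurry F)) (a b : ℝ) :
    ContDiff ℝ k fun x => ∫ s in a..b, F x s := by
  induction k generalizing F with
  | zero =>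
    exact contDiff_zero.2 (intervalIntegral.continuous_parametric_intervalIntegral_of_continuous'
      (contDiff_zero.1 hF) a b)
  | succ k ih =>
    push_cast at hF ⊢
    have hderiv := hasDerivAt_parametric_intervalIntegral_of_contDiff (hF.of_le (by simp)) a b
    refine contDiff_succ_iff_deriv.2 ⟨fun x => (hderiv x).differentiableAt, by simp, ?_⟩
    rw [funext fun x => (hderiv x).deriv]
    exact ih hF.uncurry_deriv_fst

theorem ContDiff.exists_eq_smul_of_apply_zero [CompleteSpace E] {f : ℝ → E} {k : ℕ}
    (hf : ContDiff ℝ (k + 1) f) (hf0 : f 0 = 0) :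
    ∃ g : ℝ → E, ContDiff ℝ k g ∧ ∀ t, f t = t • g t := by
  have hf' : ContDiff ℝ k (deriv f) := (contDiff_succ_iff_deriv.1 hf).2.2
  refine ⟨fun t => ∫ s in (0 : ℝ)..1, deriv f (s * t),
    contDiff_parametric_intervalIntegral_of_contDiff (hf'.comp (by fun_prop)) 0 1, fun t => ?_⟩
  have hderiv (s : ℝ) : HasDerivAt (fun s => f (s * t)) (t • deriv f (s * t)) s := by
    simpa [comp_def] using (hf.differentiable (by simp) (s * t)).hasDerivAt.scomp s
      ((hasDerivAt_id s).mul_const t)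
  rw [← intervalIntegral.integral_smul, intervalIntegral.integral_eq_sub_of_hasDerivAt
    (fun s _ => hderiv s)
    (((hf'.continuous.comp (by fun_prop)).const_smul t).intervalIntegrable _ _)]
  simp [hf0]

theorem ContDiff.exists_eq_pow_smul_of_eventuallyEq [CompleteSpace E] {f g₀ : ℝ → E} {k m : ℕ}
    (hf : ContDiff ℝ (k + m) f) (hg₀ : ContinuousAt g₀ 0)
    (hfg₀ : f =ᶠ[𝓝 0] fun t => t ^ m • g₀ t) :
    ∃ g : ℝ → E, ContDiff ℝ k g ∧ ∀ t, f t = t ^ m • g t := by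
  induction m generalizing f with
  | zero => exact ⟨f, by simpa using hf, by simp⟩
  | succ m ih =>
    have hf0 : f 0 = 0 := by simpa using hfg₀.eq_of_nhds
    obtain ⟨f₁, hf₁, hff₁⟩ :=
      ContDiff.exists_eq_smul_of_apply_zero (k := k + m) (by simpa [add_assoc] using hf) hf0
    have hf₁g₀ : f₁ =ᶠ[𝓝 0] fun t => t ^ m • g₀ t := by
      refine (hf₁.continuous.continuousAt.eventuallyEq_nhds_iff_eventuallyEq_nhdsNE
        ((continuousAt_id.pow m).smul hg₀)).1 ?_
      filter_upwards [hfg₀.filter_mono nhdsWithin_le_nhds, self_mem_nhdsWithin] with t ht ht0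
      refine smul_right_injective E (ht0 : t ≠ 0) ?_
      change t • f₁ t = t • t ^ m • g₀ t
      rw [← hff₁, ht, pow_succ', mul_smul]
    obtain ⟨g, hg, hf₁g⟩ := ih hf₁ hf₁g₀
    exact ⟨g, hg, fun t => by rw [hff₁, hf₁g, smul_smul, ← pow_succ']⟩

/-- If `f` is `C^n` near `0` and its multiplicity (order of flatness) at `0` is `m < n`
(i.e. `m` is the largest integer `p` with `f(t) = t^p g(t)` near `0` for continuous `g`),
then `f(t) = t^m g(t)` near `0` for a `C^{n-m}` function `g` with `g(0) ≠ 0`. -/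
theorem stmt7 (n m : ℕ) (f : ℝ → ℂ)
    (hf : ContDiffAt ℝ n f 0)
    (hmul : ∃ g : ℝ → ℂ, Continuous g ∧ ∀ᶠ t in 𝓝 (0 : ℝ), f t = t ^ m * g t)
    (hmax : ¬ ∃ g : ℝ → ℂ, Continuous g ∧ ∀ᶠ t in 𝓝 (0 : ℝ), f t = t ^ (m + 1) * g t)
    (hmn : m < n) :
    ∃ (g : ℝ → ℂ) (U : Set ℝ), U ∈ 𝓝 (0 : ℝ) ∧ ContDiffOn ℝ (n - m) g U ∧ g 0 ≠ 0 ∧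
      ∀ t ∈ U, f t = t ^ m * g t := by
  obtain ⟨g₀, hg₀, hfg₀⟩ := hmul
  obtain ⟨F, hF, hFf⟩ := hf.exists_contDiff_eventuallyEq
  have hFg₀ : F =ᶠ[𝓝 0] fun t => t ^ m • g₀ t :=
    hFf.trans (hfg₀.mono fun t ht => by simp [ht, Complex.real_smul])
  obtain ⟨g, hg, hFg⟩ := ContDiff.exists_eq_pow_smul_of_eventuallyEq (k := n - m)
    (by rwa [← Nat.cast_add, Nat.sub_add_cancel hmn.le]) hg₀.continuousAt hFg₀
  have hFg' (t : ℝ) : F t = t ^ m * g t := by rw [hFg, Complex.real_smul, Complex.ofReal_pow]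
  refine ⟨g, {t | F t = f t}, hFf, hg.contDiffOn, fun hg0 => hmax ?_, fun t ht => ht ▸ hFg' t⟩
  obtain ⟨k, hk⟩ := Nat.exists_eq_add_of_lt hmn
  obtain ⟨h, hh, hgh⟩ := ContDiff.exists_eq_smul_of_apply_zero (k := k)
    (by rwa [hk, add_assoc, Nat.add_sub_cancel_left, Nat.cast_add, Nat.cast_one] at hg) hg0
  refine ⟨h, hh.continuous, hFf.symm.mono fun t ht => ?_⟩
  rw [ht, hFg', hgh, Complex.real_smul, pow_succ, mul_assoc]
end

section
/- Let P_0 = z^n + Σ_{j=1}^n (-1)^j a_j z^{n-j} be a monic complex polynomial with P_0 = P_1 · P_2 where P_1 and P_2 are monic polynomials without a common root. Then there exist real analytic mappings P ↦ P_1(P), P ↦ P_2(P), defined for monic polynomials P of degree n near P_0 (in coefficient space ℂ^n), taking values in monic polynomials of degrees deg P_1 and deg P_2, such that P = P_1(P)·P_2(P) and P_1(P_0) = P_1, P_2(P_0) = P_2. -/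
open Finset Filter Topology

/-- Evaluation of the monic polynomial `z^m + ∑_{j=1}^m (-1)^j c_j z^{m-j}` with coefficient
vector `c ∈ ℂ^m` at `z`. -/
noncomputable def monicEval (m : ℕ) (c : Fin m → ℂ) (z : ℂ) : ℂ :=
  z ^ m + ∑ j : Fin m, (-1 : ℂ) ^ (j.1 + 1) * c j * z ^ (m - 1 - j.1)

/-!
In coefficient space, multiplication `(P₁, P₂) ↦ P₁ * P₂` of monic polynomials of degrees
`n₁, n₂` is a polynomial map, hence analytic, and its derivative at `(P₁, P₂)` is the Sylvester
map `(A, B) ↦ A * P₂ + P₁ * B` on polynomials of degrees `< n₁`, `< n₂`. If `P₁` and `P₂` are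
coprime, `A * P₂ + P₁ * B = 0` forces `P₁ ∣ A`, so `A = 0` by degree, and then `B = 0`: the
Sylvester map is injective, hence bijective by counting dimensions. The analytic inverse function
theorem then gives a local analytic inverse of multiplication near `P₁ * P₂`, whose two components
are the factorisation maps.
-/

lemma HasStrictFDerivAt.exists_analyticOnNhd_rightInverse {𝕜 E F : Type*}
    [NontriviallyNormedField 𝕜] [NormedAddCommGroup E] [NormedSpace 𝕜 E] [CompleteSpace E]
    [NormedAddCommGroup F] [NormedSpace 𝕜 F] [CompleteSpace F] {f : E → F} {f' : E ≃L[𝕜] F}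
    {p : E} (hf' : HasStrictFDerivAt f (f' : E →L[𝕜] F) p) (hf : AnalyticAt 𝕜 f p) :
    ∃ U ∈ 𝓝 (f p), IsOpen U ∧ ∃ g : F → E,
      AnalyticOnNhd 𝕜 g U ∧ (∀ y ∈ U, f (g y) = y) ∧ g (f p) = p := by
  set e := hf'.toOpenPartialHomeomorph f
  have hp : p ∈ e.source := hf'.mem_toOpenPartialHomeomorph_source
  have hsymm : AnalyticAt 𝕜 e.symm (f p) :=
    e.analyticAt_symm' hp hf hf'.hasFDerivAt.fderiv
  obtain ⟨U, hU, hUo, hpU⟩ := mem_nhds_iff.1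
    (inter_mem hsymm.eventually_analyticAt (e.open_target.mem_nhds (e.map_source hp)))
  exact ⟨U, hUo.mem_nhds hpU, hUo, e.symm, fun y hy => (hU hy).1,
    fun y hy => e.right_inv (hU hy).2, e.left_inv hp⟩

namespace MonicCoeffs

open Polynomial

section Encoding

variable {R : Type*} [CommRing R]

/- As in `monicEval`, the coefficient vector `c` of a monic polynomial of degree `m` lists
`(-1) ^ (j + 1)` times the coefficient of `X ^ (m - 1 - j)`. -/
noncomputable def tailPoly (m : ℕ) : (Fin m → R) →ₗ[R] R[X] :=
  ∑ j : Fin m, LinearMap.smulRight (LinearMap.proj j) ((-1 : R) ^ (j.1 + 1) • X ^ (m - 1 - j.1))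

noncomputable def tailCoeffs (m : ℕ) : R[X] →ₗ[R] (Fin m → R) :=
  LinearMap.pi fun j => (-1 : R) ^ (j.1 + 1) • lcoeff R (m - 1 - j.1)

noncomputable def monicPoly (m : ℕ) (c : Fin m → R) : R[X] :=
  X ^ m + tailPoly m c

lemma tailPoly_apply (m : ℕ) (c : Fin m → R) :
    tailPoly m c = ∑ j : Fin m, C ((-1 : R) ^ (j.1 + 1) * c j) * X ^ (m - 1 - j.1) := by
  simp only [tailPoly, LinearMap.sum_apply, LinearMap.smulRight_apply, LinearMap.proj_apply,
    smul_eq_C_mul, C_mul]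
  exact Finset.sum_congr rfl fun j _ => by ring

lemma tailCoeffs_apply (m : ℕ) (p : R[X]) (j : Fin m) :
    tailCoeffs m p j = (-1 : R) ^ (j.1 + 1) * p.coeff (m - 1 - j.1) := rfl

lemma degree_tailPoly_lt (m : ℕ) (c : Fin m → R) : (tailPoly m c).degree < m := by
  rw [tailPoly_apply]
  refine (degree_sum_le _ _).trans_lt ((Finset.sup_lt_iff (WithBot.bot_lt_coe m)).2 fun j _ => ?_)
  exact (degree_C_mul_X_pow_le _ _).trans_lt (Nat.cast_lt.2 (by omega))

lemma coeff_tailPoly (m : ℕ) (c : Fin m → R) (j : Fin m) :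
    (tailPoly m c).coeff (m - 1 - j.1) = (-1 : R) ^ (j.1 + 1) * c j := by
  rw [tailPoly_apply, finsetSum_coeff, Finset.sum_eq_single j]
  · rw [coeff_C_mul_X_pow, if_pos rfl]
  · intro i _ hij
    rw [coeff_C_mul_X_pow, if_neg fun h => hij (Fin.ext (by omega))]
  · simp

lemma neg_one_pow_mul_self (k : ℕ) : (-1 : R) ^ k * (-1 : R) ^ k = 1 := by
  rw [← mul_pow, neg_one_mul, neg_neg, one_pow]

lemma tailCoeffs_tailPoly (m : ℕ) (c : Fin m → R) : tailCoeffs m (tailPoly m c) = c := by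
  funext j
  rw [tailCoeffs_apply, coeff_tailPoly, ← mul_assoc, neg_one_pow_mul_self, one_mul]

lemma tailPoly_injective (m : ℕ) : Function.Injective (tailPoly (R := R) m) :=
  Function.LeftInverse.injective (tailCoeffs_tailPoly m)

lemma tailCoeffs_X_pow (m : ℕ) : tailCoeffs m (X ^ m : R[X]) = 0 := by
  funext j
  rw [tailCoeffs_apply, coeff_X_pow, if_neg (by omega), mul_zero, Pi.zero_apply]

lemma tailPoly_tailCoeffs {m : ℕ} {p : R[X]} (hp : p.degree < m) :
    tailPoly m (tailCoeffs m p) = p := by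
  ext k
  by_cases hk : k < m
  · obtain ⟨j, rfl⟩ : ∃ j : Fin m, m - 1 - j.1 = k := ⟨⟨m - 1 - k, by omega⟩, by simp; omega⟩
    rw [coeff_tailPoly, tailCoeffs_apply, ← mul_assoc, neg_one_pow_mul_self, one_mul]
  · have hmk : (m : WithBot ℕ) ≤ k := by exact_mod_cast not_lt.1 hk
    rw [coeff_eq_zero_of_degree_lt ((degree_tailPoly_lt m _).trans_le hmk),
      coeff_eq_zero_of_degree_lt (hp.trans_le hmk)]

lemma tailCoeffs_monicPoly (m : ℕ) (c : Fin m → R) : tailCoeffs m (monicPoly m c) = c := by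
  rw [monicPoly, map_add, tailCoeffs_X_pow, tailCoeffs_tailPoly, zero_add]

lemma monic_monicPoly (m : ℕ) (c : Fin m → R) : (monicPoly m c).Monic :=
  monic_X_pow_add (degree_tailPoly_lt m c)

variable [Nontrivial R]

lemma degree_monicPoly (m : ℕ) (c : Fin m → R) : (monicPoly m c).degree = m := by
  rw [monicPoly, degree_add_eq_left_of_degree_lt] <;> rw [degree_X_pow]
  exact degree_tailPoly_lt m c

lemma monicPoly_tailCoeffs {m : ℕ} {p : R[X]} (hp : p.Monic) (hd : p.degree = m) :
    monicPoly m (tailCoeffs m p) = p := by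
  have hlt : (p - X ^ m).degree < (m : WithBot ℕ) := by
    simpa [hd] using degree_sub_lt_left (q := X ^ m) (by rw [hd, degree_X_pow]) hp.ne_zero
      (by rw [hp.leadingCoeff, leadingCoeff_X_pow])
  have hcoeffs : tailCoeffs m p = tailCoeffs m (p - X ^ m) := by
    rw [map_sub, tailCoeffs_X_pow, sub_zero]
  rw [monicPoly, hcoeffs, tailPoly_tailCoeffs hlt, add_sub_cancel]

end Encoding

section Sylvester

lemma degree_mul_add_mul_lt {R : Type*} [Semiring R] {m n : ℕ} {P Q A B : R[X]}
    (hP : P.degree = m) (hQ : Q.degree = n) (hA : A.degree < m) (hB : B.degree < n) :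
    (A * Q + P * B).degree < ↑(m + n) := by
  refine (degree_add_le _ _).trans_lt (max_lt ?_ ?_)
  · calc (A * Q).degree ≤ A.degree + n := hQ ▸ degree_mul_le A Q
      _ < m + n := WithBot.add_lt_add_right (WithBot.natCast_ne_bot n) hA
      _ = ↑(m + n) := (Nat.cast_add m n).symm
  · calc (P * B).degree ≤ m + B.degree := hP ▸ degree_mul_le P B
      _ < m + n := WithBot.add_lt_add_left (WithBot.natCast_ne_bot m) hB
      _ = ↑(m + n) := (Nat.cast_add m n).symm

variable {R : Type*} [CommRing R]

lemma eq_zero_of_mul_add_mul_eq_zero [IsDomain R] {P Q A B : R[X]} (hPQ : IsCoprime P Q)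
    (hA : A.degree < P.degree) (h : A * Q + P * B = 0) : A = 0 :=
  eq_zero_of_dvd_of_degree_lt (hPQ.dvd_of_dvd_mul_right ⟨-B, by linear_combination h⟩) hA

noncomputable def sylvesterMap (m n : ℕ) (P Q : R[X]) :
    (Fin m → R) × (Fin n → R) →ₗ[R] (Fin (m + n) → R) :=
  tailCoeffs (m + n) ∘ₗ
    ((LinearMap.mulRight R Q ∘ₗ tailPoly m).coprod (LinearMap.mulLeft R P ∘ₗ tailPoly n))

lemma sylvesterMap_apply (m n : ℕ) (P Q : R[X]) (x : (Fin m → R) × (Fin n → R)) :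
    sylvesterMap m n P Q x = tailCoeffs (m + n) (tailPoly m x.1 * Q + P * tailPoly n x.2) := rfl

lemma sylvesterMap_injective [IsDomain R] {m n : ℕ} {P Q : R[X]} (hP : P.degree = m)
    (hQ : Q.degree = n) (hPQ : IsCoprime P Q) : Function.Injective (sylvesterMap m n P Q) := by
  rw [injective_iff_map_eq_zero]
  rintro ⟨u, v⟩ huv
  have hcoeffs : tailCoeffs (m + n) (tailPoly m u * Q + P * tailPoly n v) = 0 := huv
  have hsum : tailPoly m u * Q + P * tailPoly n v = 0 := by
    rw [← tailPoly_tailCoeffs (degree_mul_add_mul_lt hP hQ (degree_tailPoly_lt m u)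
      (degree_tailPoly_lt n v)), hcoeffs, map_zero]
  have hu : tailPoly m u = 0 :=
    eq_zero_of_mul_add_mul_eq_zero hPQ (hP ▸ degree_tailPoly_lt m u) hsum
  have hv : tailPoly n v = 0 :=
    eq_zero_of_mul_add_mul_eq_zero (B := tailPoly m u) hPQ.symm (hQ ▸ degree_tailPoly_lt n v)
      (by linear_combination hsum)
  rw [(injective_iff_map_eq_zero _).1 (tailPoly_injective m) u hu,
    (injective_iff_map_eq_zero _).1 (tailPoly_injective n) v hv, Prod.mk_zero_zero]

lemma sylvesterMap_bijective {K : Type*} [Field K] {m n : ℕ} {P Q : K[X]} (hP : P.degree = m)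
    (hQ : Q.degree = n) (hPQ : IsCoprime P Q) : Function.Bijective (sylvesterMap m n P Q) :=
  have hinj := sylvesterMap_injective hP hQ hPQ
  ⟨hinj, (LinearMap.injective_iff_surjective_of_finrank_eq_finrank (by simp)).1 hinj⟩

end Sylvester

section Multiplication

variable {R : Type*} [CommRing R]

noncomputable def mulCoeffs (m n : ℕ) (x : (Fin m → R) × (Fin n → R)) : Fin (m + n) → R :=
  tailCoeffs (m + n) (monicPoly m x.1 * monicPoly n x.2)

noncomputable def tailMul (m n : ℕ) : (Fin m → R) →ₗ[R] (Fin n → R) →ₗ[R] (Fin (m + n) → R) :=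
  ((LinearMap.mul R R[X]).compl₁₂ (tailPoly m) (tailPoly n)).compr₂ (tailCoeffs (m + n))

lemma tailMul_apply (m n : ℕ) (u : Fin m → R) (v : Fin n → R) :
    tailMul m n u v = tailCoeffs (m + n) (tailPoly m u * tailPoly n v) := rfl

lemma mulCoeffs_eq_sylvesterMap_add_tailMul (m n : ℕ) (x : (Fin m → R) × (Fin n → R)) :
    mulCoeffs m n x = sylvesterMap m n (X ^ m) (X ^ n) x + tailMul m n x.1 x.2 := by
  have hexpand : monicPoly m x.1 * monicPoly n x.2 = X ^ (m + n) +
      (tailPoly m x.1 * X ^ n + X ^ m * tailPoly n x.2) + tailPoly m x.1 * tailPoly n x.2 := by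
    rw [monicPoly, monicPoly, pow_add]; ring
  rw [mulCoeffs, hexpand, map_add, map_add, tailCoeffs_X_pow, zero_add, sylvesterMap_apply,
    tailMul_apply]

lemma monicPoly_mulCoeffs [Nontrivial R] (m n : ℕ) (x : (Fin m → R) × (Fin n → R)) :
    monicPoly (m + n) (mulCoeffs m n x) = monicPoly m x.1 * monicPoly n x.2 :=
  monicPoly_tailCoeffs ((monic_monicPoly m x.1).mul (monic_monicPoly n x.2)) <| by
    rw [(monic_monicPoly n x.2).degree_mul, degree_monicPoly, degree_monicPoly, Nat.cast_add]

lemma mulCoeffs_eq_of_monicPoly_eq {m n : ℕ} {x : (Fin m → R) × (Fin n → R)}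
    {c : Fin (m + n) → R} (h : monicPoly (m + n) c = monicPoly m x.1 * monicPoly n x.2) :
    mulCoeffs m n x = c := by
  rw [mulCoeffs, ← h, tailCoeffs_monicPoly]

end Multiplication

section Analytic

variable {𝕜 : Type*} [NontriviallyNormedField 𝕜] [CompleteSpace 𝕜] {m n : ℕ}

lemma analyticAt_mulCoeffs (x : (Fin m → 𝕜) × (Fin n → 𝕜)) :
    AnalyticAt 𝕜 (mulCoeffs m n) x := by
  rw [funext (mulCoeffs_eq_sylvesterMap_add_tailMul (R := 𝕜) m n)]
  exact (LinearMap.toContinuousLinearMap (sylvesterMap m n (X ^ m) (X ^ n))).analyticAt x |>.add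
    ((tailMul m n).toContinuousBilinearMap.analyticAt_bilinear x)

lemma hasStrictFDerivAt_mulCoeffs (x : (Fin m → 𝕜) × (Fin n → 𝕜)) :
    HasStrictFDerivAt (mulCoeffs m n)
      (LinearMap.toContinuousLinearMap (sylvesterMap m n (monicPoly m x.1) (monicPoly n x.2)))
      x := by
  rw [funext (mulCoeffs_eq_sylvesterMap_add_tailMul (R := 𝕜) m n)]
  refine ((LinearMap.toContinuousLinearMap (sylvesterMap m n (X ^ m) (X ^ n))).hasStrictFDerivAt
    |>.add ((tailMul (R := 𝕜) m n).toContinuousBilinearMap.hasStrictFDerivAt_of_bilinear (x := x)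
      hasStrictFDerivAt_fst hasStrictFDerivAt_snd)).congr_fderiv ?_
  refine ContinuousLinearMap.ext fun y => ?_
  simp only [add_apply, LinearMap.coe_toContinuousLinearMap',
    ContinuousLinearMap.precompR_apply, ContinuousLinearMap.precompL_apply,
    ContinuousLinearMap.compL_apply, ContinuousLinearMap.comp_apply, ContinuousLinearMap.coe_fst',
    ContinuousLinearMap.coe_snd', LinearMap.toContinuousBilinearMap_apply, sylvesterMap_apply,
    tailMul_apply, ← map_add]
  congr 1
  rw [monicPoly, monicPoly]
  ring

end Analytic

section Complex

lemma eval_monicPoly (m : ℕ) (c : Fin m → ℂ) (z : ℂ) :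
    (monicPoly m c).eval z = monicEval m c z := by
  simp [monicPoly, monicEval, tailPoly_apply, eval_finsetSum, mul_assoc]

lemma monicEval_mulCoeffs (m n : ℕ) (x : (Fin m → ℂ) × (Fin n → ℂ)) (z : ℂ) :
    monicEval (m + n) (mulCoeffs m n x) z = monicEval m x.1 z * monicEval n x.2 z := by
  rw [← eval_monicPoly, monicPoly_mulCoeffs, eval_mul, eval_monicPoly, eval_monicPoly]

lemma mulCoeffs_eq_of_monicEval_eq {m n : ℕ} {u : Fin m → ℂ} {v : Fin n → ℂ}
    {c : Fin (m + n) → ℂ} (h : ∀ z, monicEval (m + n) c z = monicEval m u z * monicEval n v z) :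
    mulCoeffs m n (u, v) = c :=
  mulCoeffs_eq_of_monicPoly_eq <| Polynomial.funext fun z => by
    rw [eval_mul, eval_monicPoly, eval_monicPoly, eval_monicPoly, h]

lemma isCoprime_monicPoly {m n : ℕ} {b : Fin m → ℂ} {d : Fin n → ℂ}
    (h : ∀ z, ¬ (monicEval m b z = 0 ∧ monicEval n d z = 0)) :
    IsCoprime (monicPoly m b) (monicPoly n d) :=
  (isCoprime_iff_aeval_ne_zero_of_isAlgClosed ℂ ℂ _ _).2 fun z => by
    simpa only [coe_aeval_eq_eval, eval_monicPoly, not_and_or] using h z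

end Complex

end MonicCoeffs

open MonicCoeffs in
/-- Splitting lemma: if the monic polynomial `P₀` (coefficients `a`) factors as `P₁ · P₂`
with `P₁, P₂` monic without common root, then for `P` in a neighborhood of `P₀` in
coefficient space there are analytic maps `P ↦ P₁(P)`, `P ↦ P₂(P)` with `P = P₁(P)·P₂(P)`
and the given initial values. -/
theorem stmt11 (n1 n2 : ℕ) (b : Fin n1 → ℂ) (d : Fin n2 → ℂ) (a : Fin (n1 + n2) → ℂ)
    (hsplit : ∀ z : ℂ, monicEval (n1 + n2) a z = monicEval n1 b z * monicEval n2 d z)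
    (hnocommon : ∀ z : ℂ, ¬ (monicEval n1 b z = 0 ∧ monicEval n2 d z = 0)) :
    ∃ U ∈ 𝓝 a, IsOpen U ∧
      ∃ (F : (Fin (n1 + n2) → ℂ) → Fin n1 → ℂ) (G : (Fin (n1 + n2) → ℂ) → Fin n2 → ℂ),
        AnalyticOn ℂ F U ∧ AnalyticOn ℂ G U ∧
        (∀ c ∈ U, ∀ z : ℂ,
          monicEval (n1 + n2) c z = monicEval n1 (F c) z * monicEval n2 (G c) z) ∧
        F a = b ∧ G a = d := by
  have hbij := sylvesterMap_bijective (degree_monicPoly n1 b) (degree_monicPoly n2 d)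
    (isCoprime_monicPoly hnocommon)
  obtain ⟨U, hU, hUo, g, hg, hgU, hga⟩ :=
    HasStrictFDerivAt.exists_analyticOnNhd_rightInverse
      (f' := (LinearEquiv.ofBijective _ hbij).toContinuousLinearEquiv)
      (hasStrictFDerivAt_mulCoeffs (b, d)) (analyticAt_mulCoeffs (b, d))
  rw [mulCoeffs_eq_of_monicEval_eq hsplit] at hU hga
  refine ⟨U, hU, hUo, fun c => (g c).1, fun c => (g c).2,
    fun c hc => (analyticAt_fst.comp (hg c hc)).analyticWithinAt,
    fun c hc => (analyticAt_snd.comp (hg c hc)).analyticWithinAt,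
    fun c hc z => ?_, congrArg Prod.fst hga, congrArg Prod.snd hga⟩
  simpa only [hgU c hc] using monicEval_mulCoeffs n1 n2 (g c) z
end

section
/- Let f : ℝ → ℂ be a C^2 function defined near points where it vanishes. There exists a differentiable function g defined on ℝ with g(t)^2 = f(t) for all t if and only if there exists a continuous function g with g^2 = f such that f vanishes of order ≥ 2 at each of its zeros, i.e., at every t_0 with f(t_0) = 0 one has f'(t_0) = 0 and the multiplicity of f at t_0 is ≥ 2. -/
/-!
A differentiable square root `g` of `f` vanishes at each zero `t₀` of `f`, so `f' = 2 g g'` vanishes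
there and `f = (t - t₀)² (dslope g t₀)²`.

Conversely, a continuous square root `g₀` is differentiable wherever it does not vanish, and at a
zero `t₀` the squared slope `(g₀ t / (t - t₀))² = f t / (t - t₀)²` tends to `h t₀`. If `h t₀ = 0`,
every square root of `f` has derivative `0` at `t₀`. Otherwise, on each side of `t₀`, the slope of
`g₀` at `t₀` is a continuous square root of a function close to `h t₀ ≠ 0`, so it has one-sided
limits `r₊`, `r₋` with `r₊² = r₋²`: either `g₀` is differentiable at `t₀`, or `r₋ = -r₊`. The points
of the second kind form a set `D` that accumulates only at flat zeros, and multiplying `g₀` by `-1`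
to the number of points of `D` between `t` and a base point changes its sign exactly across the
points of `D`, which makes it differentiable everywhere.
-/

open Filter Topology Set
open scoped symmDiff Interval

theorem Set.uIoc_symmDiff_uIoc {α : Type*} [LinearOrder α] (a b c : α) :
    Ι a b ∆ Ι a c = Ι b c := by
  ext x
  simp only [mem_symmDiff, mem_uIoc, ← not_lt]
  tauto

theorem neg_one_pow_ncard_symmDiff {α M : Type*} [CommMonoid M] [HasDistribNeg M] {s t : Set α}
    (hs : s.Finite) (ht : t.Finite) :
    (-1 : M) ^ (s ∆ t).ncard = (-1) ^ s.ncard * (-1) ^ t.ncard := by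
  rw [Set.symmDiff_def, ncard_union_eq disjoint_sdiff_sdiff hs.sdiff ht.sdiff,
    ← ncard_inter_add_ncard_sdiff_eq_ncard s t hs, ← ncard_inter_add_ncard_sdiff_eq_ncard t s ht,
    inter_comm t s]
  have h : (-1 : M) ^ (s ∩ t).ncard * (-1) ^ (s ∩ t).ncard = 1 := by
    rw [← pow_add, ← two_mul, pow_mul, neg_one_sq, one_pow]
  simp only [pow_add]
  rw [mul_mul_mul_comm, h, one_mul]

theorem IsCompact.finite_inter_of_disjoint_derivedSet {X : Type*} [TopologicalSpace X]
    {K D : Set X} (hK : IsCompact K) (hKD : Disjoint K (derivedSet D)) : (D ∩ K).Finite := by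
  by_contra h
  obtain ⟨x, hxK, hx⟩ := Set.Infinite.exists_accPt_of_subset_isCompact h hK inter_subset_right
  exact hKD.notMem_of_mem_left hxK (derivedSet_mono _ _ inter_subset_left hx)

theorem notMem_derivedSet_iff {X : Type*} [TopologicalSpace X] {D : Set X} {x : X} :
    x ∉ derivedSet D ↔ ∀ᶠ y in 𝓝[≠] x, y ∉ D := by
  rw [mem_derivedSet, accPt_iff_frequently_nhdsNE, not_frequently]

-- The base point depends only on the component of `t` in the complement of `derivedSet D`, so that
-- `D ∩ Ι b t` is finite.
noncomputable def crossingSign (D : Set ℝ) (t : ℝ) : ℂ :=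
  (-1) ^ (D ∩ Ι (Classical.epsilon (· ∈ connectedComponentIn (derivedSet D)ᶜ t)) t).ncard

section crossingSign

variable {D : Set ℝ} {t : ℝ}

theorem crossingSign_sq (D : Set ℝ) (t : ℝ) : crossingSign D t ^ 2 = 1 := by
  rw [crossingSign, ← pow_mul, mul_comm, pow_mul, neg_one_sq, one_pow]

theorem eventually_crossingSign_eq (ht : t ∉ derivedSet D) :
    ∀ᶠ s in 𝓝 t, crossingSign D s = (-1) ^ (D ∩ Ι s t).ncard * crossingSign D t := by
  set C := connectedComponentIn (derivedSet D)ᶜ t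
  set b := Classical.epsilon (· ∈ C)
  have htC : t ∈ C := mem_connectedComponentIn ht
  have hb : b ∈ C := Classical.epsilon_spec ⟨t, htC⟩
  have hfin : ∀ x ∈ C, (D ∩ Ι b x).Finite := fun x hx ↦
    (isCompact_uIcc.finite_inter_of_disjoint_derivedSet (subset_compl_iff_disjoint_right.1
      ((isPreconnected_connectedComponentIn.ordConnected.uIcc_subset hb hx).trans
        (connectedComponentIn_subset _ _)))).subset (inter_subset_inter_right _ uIoc_subset_uIcc)
  filter_upwards [connectedComponentIn_mem_nhds ((isClosed_derivedSet D).isOpen_compl.mem_nhds ht)]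
    with s hs
  have hsC : connectedComponentIn (derivedSet D)ᶜ s = C := (connectedComponentIn_eq hs).symm
  rw [crossingSign, crossingSign, hsC, ← uIoc_symmDiff_uIoc b s t, inter_symmDiff_distrib_left,
    neg_one_pow_ncard_symmDiff (hfin s hs) (hfin t htC), mul_assoc, ← pow_add, ← two_mul,
    pow_mul, neg_one_sq, one_pow, mul_one]

theorem eventually_inter_uIoc_subset (ht : t ∉ derivedSet D) : ∀ᶠ s in 𝓝 t, D ∩ Ι s t ⊆ {t} := by
  rw [notMem_derivedSet_iff, eventually_nhdsWithin_iff] at ht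
  obtain ⟨ε, hε, hD⟩ := Metric.eventually_nhds_iff_ball.1 ht
  filter_upwards [Metric.ball_mem_nhds t hε] with s hs x ⟨hxD, hx⟩
  by_contra hxt
  exact hD x ((convex_ball t ε).ordConnected.uIcc_subset hs (Metric.mem_ball_self hε)
    (uIoc_subset_uIcc hx)) hxt hxD

theorem eventually_crossingSign_eq_self (ht : t ∉ derivedSet D) (htD : t ∉ D) :
    ∀ᶠ s in 𝓝 t, crossingSign D s = crossingSign D t := by
  filter_upwards [eventually_crossingSign_eq ht, eventually_inter_uIoc_subset ht] with s hs hsub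
  have : D ∩ Ι s t = ∅ := subset_empty_iff.1 fun x hx ↦ htD (hsub hx ▸ hx.1)
  rw [hs, this, ncard_empty, pow_zero, one_mul]

theorem eventually_nhdsGT_crossingSign_eq (ht : t ∉ derivedSet D) :
    ∀ᶠ s in 𝓝[>] t, crossingSign D s = crossingSign D t := by
  filter_upwards [nhdsWithin_le_nhds (eventually_crossingSign_eq ht),
    nhdsWithin_le_nhds (eventually_inter_uIoc_subset ht), self_mem_nhdsWithin] with s hs hsub hts
  have : D ∩ Ι s t = ∅ := subset_empty_iff.1 fun x hx ↦ by
    have hxt : x = t := hsub hx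
    rw [uIoc_of_ge hts.le, hxt] at hx
    exact lt_irrefl t hx.2.1
  rw [hs, this, ncard_empty, pow_zero, one_mul]

theorem eventually_nhdsLT_crossingSign_eq_neg (ht : t ∉ derivedSet D) (htD : t ∈ D) :
    ∀ᶠ s in 𝓝[<] t, crossingSign D s = -crossingSign D t := by
  filter_upwards [nhdsWithin_le_nhds (eventually_crossingSign_eq ht),
    nhdsWithin_le_nhds (eventually_inter_uIoc_subset ht), self_mem_nhdsWithin] with s hs hsub hst
  have : D ∩ Ι s t = {t} := hsub.antisymm <| singleton_subset_iff.2
    ⟨htD, by rw [uIoc_of_le (le_of_lt hst)]; exact ⟨hst, le_rfl⟩⟩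
  rw [hs, this, ncard_singleton, pow_one, neg_one_mul]

end crossingSign

theorem Filter.Tendsto.exists_tendsto_of_sq_tendsto {X : Type*} [TopologicalSpace X]
    {l : Filter X} [l.NeBot] {ι : Sort*} {P : ι → Prop} {U : ι → Set X} (hl : l.HasBasis P U)
    (hU : ∀ i, P i → IsPreconnected (U i)) {q : X → ℂ} {c : ℂ}
    (hq : ∀ᶠ x in l, ContinuousAt q x) (hc : c ≠ 0) (h : Tendsto (fun x ↦ q x ^ 2) l (𝓝 c)) :
    ∃ r, r ^ 2 = c ∧ Tendsto q l (𝓝 r) := by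
  set b := c ^ (2⁻¹ : ℂ)
  -- `σ` is a continuous square root of `q ^ 2` near the limit, through the principal branch
  set σ : X → ℂ := fun x ↦ b * (q x ^ 2 / c) ^ (2⁻¹ : ℂ)
  have hb : b ^ 2 = c := Complex.cpow_ofNat_inv_pow c 2
  have hσ : ∀ x, σ x ^ 2 = q x ^ 2 := fun x ↦ by
    rw [mul_pow, hb, Complex.cpow_ofNat_inv_pow, mul_div_cancel₀ _ hc]
  have h1 : Tendsto (fun x ↦ q x ^ 2 / c) l (𝓝 1) := by
    simpa [hc] using h.div_const c
  obtain ⟨i, hi, hsub⟩ := hl.mem_iff.1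
    ((h1.eventually (Complex.isOpen_slitPlane.mem_nhds Complex.one_mem_slitPlane)).and hq)
  have hσc : ContinuousOn σ (U i) := fun x hx ↦ by
    have : ContinuousAt (fun y ↦ (q y ^ 2 / c) ^ (2⁻¹ : ℂ)) x :=
      (continuousAt_cpow_const (hsub hx).1).comp (f := fun y ↦ q y ^ 2 / c)
        (((hsub hx).2.pow 2).div_const c)
    exact (continuousAt_const.mul this).continuousWithinAt
  have hq0 : ∀ x ∈ U i, q x ≠ 0 := fun x hx h0 ↦
    Complex.slitPlane_ne_zero (hsub hx).1 (by simp [h0])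
  have hσ0 : ∀ x ∈ U i, σ x ≠ 0 := fun x hx h0 ↦
    hq0 x hx (pow_eq_zero_iff two_ne_zero |>.1 (by rw [← hσ, h0]; ring))
  have hsign_sq : ∀ x ∈ U i, (q x / σ x) ^ 2 = 1 := fun x hx ↦ by
    rw [div_pow, hσ, div_self (pow_ne_zero 2 (hq0 x hx))]
  have hsign : MapsTo (fun x ↦ q x / σ x) (U i) {1, -1} := fun x hx ↦ by
    simpa using sq_eq_one_iff.1 (hsign_sq x hx)
  have hsignc : ContinuousOn (fun x ↦ q x / σ x) (U i) := fun x hx ↦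
    ((hsub hx).2.continuousWithinAt).div (hσc x hx) (hσ0 x hx)
  obtain ⟨x₀, hx₀⟩ := nonempty_of_mem (hl.mem_of_mem hi)
  have he : ∀ x ∈ U i, q x = q x₀ / σ x₀ * σ x := fun x hx ↦ by
    rw [← (hU i hi).constant_of_mapsTo (Set.toFinite _).isDiscrete hsignc hsign hx hx₀,
      div_mul_cancel₀ _ (hσ0 x hx)]
  have hσb : Tendsto σ l (𝓝 b) := by
    simpa using tendsto_const_nhds.mul
      ((continuousAt_cpow_const Complex.one_mem_slitPlane).tendsto.comp h1)
  refine ⟨q x₀ / σ x₀ * b, ?_, ?_⟩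
  · rw [mul_pow, hsign_sq x₀ hx₀, one_mul, hb]
  · exact (tendsto_const_nhds.mul hσb).congr'
      (eventually_of_mem (hl.mem_of_mem hi) fun x hx ↦ (he x hx).symm)

theorem slope_mul_of_eq_zero {p g : ℝ → ℂ} {t : ℝ} (hg : g t = 0) (s : ℝ) :
    slope (fun x ↦ p x * g x) t s = p s * slope g t s := by
  simp [slope_def_module, hg, mul_left_comm]

theorem tendsto_zero_of_sq_tendsto_zero {α : Type*} {l : Filter α} {q : α → ℂ}
    (h : Tendsto (fun x ↦ q x ^ 2) l (𝓝 0)) : Tendsto q l (𝓝 0) := by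
  rw [tendsto_zero_iff_norm_tendsto_zero] at h ⊢
  simpa [norm_pow, Real.sqrt_sq (norm_nonneg _)] using h.sqrt

theorem continuousAt_slope {g : ℝ → ℂ} {t s : ℝ} (hg : ContinuousAt g s) (hs : s ≠ t) :
    ContinuousAt (slope g t) s := by
  rw [slope_fun_def]
  exact ((continuousAt_id.sub continuousAt_const).inv₀ (sub_ne_zero.2 hs)).smul
    (hg.sub continuousAt_const)

theorem DifferentiableAt.of_sq {g : ℝ → ℂ} {x : ℝ} (hd : DifferentiableAt ℝ (fun s ↦ g s ^ 2) x)
    (hc : ContinuousAt g x) (hx : g x ≠ 0) : DifferentiableAt ℝ g x := by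
  have h2 : g x + g x ≠ 0 := by rw [← two_mul]; exact mul_ne_zero two_ne_zero hx
  have hsum : Tendsto (fun s ↦ g s + g x) (𝓝[≠] x) (𝓝 (g x + g x)) :=
    (hc.tendsto.mono_left nhdsWithin_le_nhds).add tendsto_const_nhds
  have heq : ∀ᶠ s in 𝓝[≠] x,
      slope (fun s ↦ g s ^ 2) x s * (g s + g x)⁻¹ = slope g x s := by
    filter_upwards [hsum.eventually_ne h2] with s hs
    rw [slope_def_module, slope_def_module, smul_mul_assoc]
    congr 1
    field_simp
    ring
  exact (hasDerivAt_iff_tendsto_slope.2 (((hasDerivAt_iff_tendsto_slope.1 hd.hasDerivAt).mul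
    (hsum.inv₀ h2)).congr' heq)).differentiableAt

theorem hasDerivAt_zero_of_sq_slope_tendsto_zero {g : ℝ → ℂ} {t : ℝ}
    (h : Tendsto (fun s ↦ slope g t s ^ 2) (𝓝[≠] t) (𝓝 0)) : HasDerivAt g 0 t :=
  hasDerivAt_iff_tendsto_slope.2 (tendsto_zero_of_sq_tendsto_zero h)

theorem hasDerivAt_mul_of_sign_flip {p g : ℝ → ℂ} {t : ℝ} {a r : ℂ} (hg : g t = 0)
    (hr : Tendsto (slope g t) (𝓝[>] t) (𝓝 r)) (hl : Tendsto (slope g t) (𝓝[<] t) (𝓝 (-r)))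
    (hpr : ∀ᶠ s in 𝓝[>] t, p s = a) (hpl : ∀ᶠ s in 𝓝[<] t, p s = -a) :
    HasDerivAt (fun s ↦ p s * g s) (a * r) t := by
  rw [hasDerivAt_iff_tendsto_slope, ← nhdsLT_sup_nhdsGT, tendsto_sup]
  rw [show slope (fun s ↦ p s * g s) t = fun s ↦ p s * slope g t s from
    funext (slope_mul_of_eq_zero hg)]
  constructor
  · rw [← neg_mul_neg]
    exact (tendsto_const_nhds.mul hl).congr' (hpl.mono fun s hs ↦ by simp only [hs])
  · exact (tendsto_const_nhds.mul hr).congr' (hpr.mono fun s hs ↦ by simp only [hs])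

theorem exists_tendsto_slope_nhdsGT_nhdsLT_neg {g : ℝ → ℂ} {t : ℝ} {c : ℂ} (hg : Continuous g)
    (hc : c ≠ 0) (h : Tendsto (fun s ↦ slope g t s ^ 2) (𝓝[≠] t) (𝓝 c))
    (hnd : ¬DifferentiableAt ℝ g t) :
    ∃ r, Tendsto (slope g t) (𝓝[>] t) (𝓝 r) ∧ Tendsto (slope g t) (𝓝[<] t) (𝓝 (-r)) := by
  have hcont : ∀ᶠ s in 𝓝[≠] t, ContinuousAt (slope g t) s :=
    eventually_mem_nhdsWithin.mono fun s hs ↦ continuousAt_slope hg.continuousAt hs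
  obtain ⟨r, hr2, hr⟩ := (h.mono_left (nhdsGT_le_nhdsNE t)).exists_tendsto_of_sq_tendsto
    (nhdsGT_basis t) (fun _ _ ↦ isPreconnected_Ioo) (nhdsGT_le_nhdsNE t hcont) hc
  obtain ⟨l, hl2, hl⟩ := (h.mono_left (nhdsLT_le_nhdsNE t)).exists_tendsto_of_sq_tendsto
    (nhdsLT_basis t) (fun _ _ ↦ isPreconnected_Ioo) (nhdsLT_le_nhdsNE t hcont) hc
  rcases sq_eq_sq_iff_eq_or_eq_neg.1 (hl2.trans hr2.symm) with rfl | rfl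
  · have : Tendsto (slope g t) (𝓝[≠] t) (𝓝 l) := by
      rw [← nhdsLT_sup_nhdsGT]
      exact hl.sup hr
    exact absurd (hasDerivAt_iff_tendsto_slope.2 this).differentiableAt hnd
  · exact ⟨r, hr, hl⟩

theorem differentiable_crossingSign_mul {g : ℝ → ℂ} (hg : Continuous g)
    (hdiff : ∀ t, g t ≠ 0 → DifferentiableAt ℝ g t)
    (hzero : ∀ t, g t = 0 → ∃ c, Tendsto (fun s ↦ slope g t s ^ 2) (𝓝[≠] t) (𝓝 c)) :
    Differentiable ℝ (fun t ↦ crossingSign {t | ¬DifferentiableAt ℝ g t} t * g t) := by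
  set D := {t | ¬DifferentiableAt ℝ g t}
  intro t
  by_cases hflat : g t = 0 ∧ Tendsto (fun s ↦ slope g t s ^ 2) (𝓝[≠] t) (𝓝 0)
  · refine (hasDerivAt_zero_of_sq_slope_tendsto_zero ?_).differentiableAt
    simpa [slope_mul_of_eq_zero hflat.1, mul_pow, crossingSign_sq] using hflat.2
  have hiso : ∀ᶠ s in 𝓝[≠] t, g s ≠ 0 := by
    by_cases hgt : g t = 0
    · obtain ⟨c, hc⟩ := hzero t hgt
      have hc0 : c ≠ 0 := fun hc0 ↦ hflat ⟨hgt, hc0 ▸ hc⟩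
      filter_upwards [hc.eventually_ne hc0] with s hs hgs
      simp [slope_def_module, hgs, hgt] at hs
    · exact nhdsWithin_le_nhds (hg.continuousAt.eventually_ne hgt)
  have hD : t ∉ derivedSet D :=
    notMem_derivedSet_iff.2 (hiso.mono fun s hs hsD ↦ hsD (hdiff s hs))
  by_cases htD : t ∈ D
  · have hgt : g t = 0 := by_contra fun h ↦ htD (hdiff t h)
    obtain ⟨c, hc⟩ := hzero t hgt
    obtain ⟨r, hr, hl⟩ :=
      exists_tendsto_slope_nhdsGT_nhdsLT_neg hg (fun hc0 ↦ hflat ⟨hgt, hc0 ▸ hc⟩) hc htD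
    exact (hasDerivAt_mul_of_sign_flip hgt hr hl (eventually_nhdsGT_crossingSign_eq hD)
      (eventually_nhdsLT_crossingSign_eq_neg hD htD)).differentiableAt
  · refine ((not_not.1 htD).const_mul (crossingSign D t)).congr_of_eventuallyEq ?_
    filter_upwards [eventually_crossingSign_eq_self hD htD] with s hs
    rw [hs]

theorem exists_continuous_sq_eq_sub_sq_mul {g : ℝ → ℂ} (hg : Differentiable ℝ g) {t₀ : ℝ}
    (h₀ : g t₀ = 0) : ∃ h : ℝ → ℂ, Continuous h ∧ ∀ t, g t ^ 2 = ((t : ℂ) - t₀) ^ 2 * h t := by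
  have hcont : Continuous (dslope g t₀) := continuousOn_univ.1
    ((continuousOn_dslope univ_mem).2 ⟨hg.continuous.continuousOn, hg t₀⟩)
  refine ⟨fun t ↦ dslope g t₀ t ^ 2, hcont.pow 2, fun t ↦ ?_⟩
  have := sub_smul_dslope g t₀ t
  rw [h₀, sub_zero, Complex.real_smul] at this
  rw [← this, mul_pow]
  push_cast
  ring

theorem tendsto_slope_sq_of_eq_sub_sq_mul {g h : ℝ → ℂ} {t : ℝ} (hg : g t = 0)
    (hh : ContinuousAt h t) (hfac : ∀ᶠ s in 𝓝 t, g s ^ 2 = ((s : ℂ) - t) ^ 2 * h s) :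
    Tendsto (fun s ↦ slope g t s ^ 2) (𝓝[≠] t) (𝓝 (h t)) := by
  refine (hh.tendsto.mono_left nhdsWithin_le_nhds).congr' ?_
  filter_upwards [nhdsWithin_le_nhds hfac, self_mem_nhdsWithin] with s hs hst
  have hst' : (s : ℂ) - t ≠ 0 := sub_ne_zero.2 (Complex.ofReal_injective.ne hst)
  rw [slope_def_module, hg, sub_zero, Complex.real_smul, mul_pow, hs]
  push_cast
  field_simp

/-- For a `C²` function `f : ℝ → ℂ` there is a differentiable square root of `f` if and only
if there is a continuous square root and `f` vanishes of order `≥ 2` at each of its zeros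
(`f'(t₀) = 0` and the multiplicity of `f` at `t₀` is `≥ 2`). -/
theorem stmt13 (f : ℝ → ℂ) (hf : ContDiff ℝ 2 f) :
    (∃ g : ℝ → ℂ, Differentiable ℝ g ∧ ∀ t, g t ^ 2 = f t) ↔
      (∃ g : ℝ → ℂ, Continuous g ∧ ∀ t, g t ^ 2 = f t) ∧
      ∀ t0 : ℝ, f t0 = 0 → deriv f t0 = 0 ∧
        ∃ h : ℝ → ℂ, Continuous h ∧ ∀ᶠ t in 𝓝 t0, f t = ((t : ℂ) - t0) ^ 2 * h t := by
  constructor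
  · rintro ⟨g, hg, hsq⟩
    refine ⟨⟨g, hg.continuous, hsq⟩, fun t₀ h₀ ↦ ?_⟩
    have hg₀ : g t₀ = 0 := pow_eq_zero_iff two_ne_zero |>.1 ((hsq t₀).trans h₀)
    obtain ⟨h, hh, hfac⟩ := exists_continuous_sq_eq_sub_sq_mul hg hg₀
    refine ⟨?_, h, hh, Eventually.of_forall fun t ↦ (hsq t).symm.trans (hfac t)⟩
    rw [← funext hsq, deriv_fun_pow (hg t₀), hg₀]
    ring
  · rintro ⟨⟨g₀, hg₀, hsq⟩, hvan⟩
    have hfd : Differentiable ℝ (fun t ↦ g₀ t ^ 2) := funext hsq ▸ hf.differentiable (by norm_num)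
    refine ⟨_, differentiable_crossingSign_mul hg₀ (fun t ht ↦ (hfd t).of_sq hg₀.continuousAt ht)
      (fun t ht ↦ ?_), fun t ↦ by rw [mul_pow, crossingSign_sq, one_mul, hsq]⟩
    obtain ⟨h, hh, hfac⟩ := (hvan t ((hsq t).symm.trans (by rw [ht]; ring))).2
    exact ⟨h t, tendsto_slope_sq_of_eq_sub_sq_mul ht hh.continuousAt
      (hfac.mono fun s hs ↦ (hsq s).trans hs)⟩
end

section
/- Let P(t)(z) = z^n + Σ_{j=2}^n (-1)^j a_j(t) z^{n-j} be a curve of monic polynomials (with a_1 = 0) whose coefficients a_j are continuous near 0 and satisfy a_j(t) = t^j b_j(t) near 0 for continuous functions b_j. If the polynomial curve Q(t)(z) = z^n + Σ_{j=2}^n (-1)^j b_j(t) z^{n-j} admits a continuous parameterization μ_1, ..., μ_n of its roots near 0, then λ_j(t) := t·μ_j(t) is a continuous parameterization of the roots of P near 0, and each λ_j is differentiable at 0 with λ_j'(0) = μ_j(0). -/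
open Finset Filter Topology

/-! If `μ` parameterizes the roots of `Q(t)`, substituting `z = t w` and multiplying by `tⁿ`
shows that `t μ` parameterizes the roots of `P(t)`, because the coefficient of `z^{n-j}` picks
up exactly the factor `t^j` relating `a_j` to `b_j`. The slope of `t ↦ t μ(t)` at `0` is
`μ(t)` itself, so continuity of `μ` at `0` gives the derivative `μ(0)`. -/

theorem hasDerivAt_smul_of_continuousAt {𝕜 E : Type*} [NontriviallyNormedField 𝕜]
    [NormedAddCommGroup E] [NormedSpace 𝕜 E] {f : 𝕜 → E} (hf : ContinuousAt f 0) :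
    HasDerivAt (fun t => t • f t) (f 0) 0 := by
  rw [hasDerivAt_iff_tendsto_slope]
  have hslope : slope (fun t => t • f t) 0 =ᶠ[𝓝[≠] 0] f := by
    filter_upwards [self_mem_nhdsWithin] with t (ht : t ≠ 0)
    simp [slope, smul_smul, inv_mul_cancel₀ ht]
  exact (hf.tendsto.mono_left nhdsWithin_le_nhds).congr' hslope.symm

theorem add_sum_mul_pow_eq_prod_sub_mul {K : Type*} [Field K] {n : ℕ} {s : Finset ℕ}
    (hs : ∀ j ∈ s, 0 < j ∧ j ≤ n) (c : ℕ → K) (r : Fin n → K)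
    (h : ∀ z, z ^ n + ∑ j ∈ s, c j * z ^ (n - j) = ∏ i, (z - r i)) (t z : K) :
    z ^ n + ∑ j ∈ s, c j * t ^ j * z ^ (n - j) = ∏ i, (z - t * r i) := by
  rcases eq_or_ne t 0 with rfl | ht
  · rw [sum_eq_zero fun j hj => by simp [zero_pow (hs j hj).1.ne']]
    simp
  calc z ^ n + ∑ j ∈ s, c j * t ^ j * z ^ (n - j)
      = t ^ n * ((z / t) ^ n + ∑ j ∈ s, c j * (z / t) ^ (n - j)) := by
        rw [mul_add, mul_sum, div_pow, mul_div_cancel₀ _ (pow_ne_zero n ht)]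
        congr 1
        refine sum_congr rfl fun j hj => ?_
        rw [← Nat.add_sub_cancel' (hs j hj).2, pow_add, Nat.add_sub_cancel_left, div_pow]
        field_simp
    _ = ∏ i, (t * (z / t - r i)) := by
        rw [h, prod_mul_distrib, prod_const, card_univ, Fintype.card_fin]
    _ = ∏ i, (z - t * r i) := prod_congr rfl fun i _ => by field_simp

theorem stmt14_general (n : ℕ) (U : Set ℝ) (hU : U ∈ 𝓝 (0 : ℝ))
    (a b : ℕ → ℝ → ℂ)
    (hab : ∀ j, 2 ≤ j → j ≤ n → ∀ t ∈ U, a j t = (t : ℂ) ^ j * b j t)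
    (mu : Fin n → ℝ → ℂ) (hmucont : ∀ i, ContinuousOn (mu i) U)
    (hQ : ∀ t ∈ U, ∀ z : ℂ,
      z ^ n + ∑ j ∈ Finset.Icc 2 n, (-1 : ℂ) ^ j * b j t * z ^ (n - j)
        = ∏ i : Fin n, (z - mu i t)) :
    (∀ i, ContinuousOn (fun t : ℝ => (t : ℂ) * mu i t) U) ∧
    (∀ t ∈ U, ∀ z : ℂ,
      z ^ n + ∑ j ∈ Finset.Icc 2 n, (-1 : ℂ) ^ j * a j t * z ^ (n - j)
        = ∏ i : Fin n, (z - (t : ℂ) * mu i t)) ∧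
    (∀ i, HasDerivAt (fun t : ℝ => (t : ℂ) * mu i t) (mu i 0) 0) := by
  refine ⟨fun i => Complex.continuous_ofReal.continuousOn.mul (hmucont i), fun t ht z => ?_,
    fun i => ?_⟩
  · have hs : ∀ j ∈ Icc 2 n, 0 < j ∧ j ≤ n := fun j hj => by
      rw [mem_Icc] at hj; omega
    rw [← add_sum_mul_pow_eq_prod_sub_mul hs _ _ (hQ t ht)]
    refine congrArg _ (sum_congr rfl fun j hj => ?_)
    rw [mem_Icc] at hj
    rw [hab j hj.1 hj.2 t ht]
    ring
  · simpa only [Complex.real_smul] using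
      hasDerivAt_smul_of_continuousAt ((hmucont i).continuousAt hU)

/-- Let `P(t)(z) = z^n + ∑_{j=2}^n (-1)^j a_j(t) z^{n-j}` with `a_j(t) = t^j b_j(t)` for
continuous `b_j` near `0`. If `Q(t)(z) = z^n + ∑_{j=2}^n (-1)^j b_j(t) z^{n-j}` admits a
continuous root parameterization `μ_1, …, μ_n` near `0`, then `λ_j(t) := t·μ_j(t)` is a
continuous parameterization of the roots of `P` near `0`, and each `λ_j` is differentiable
at `0` with `λ_j'(0) = μ_j(0)`. -/
theorem stmt14 (n : ℕ) (hn : 2 ≤ n) (U : Set ℝ) (hU : U ∈ 𝓝 (0 : ℝ))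
    (a b : ℕ → ℝ → ℂ)
    (hab : ∀ j, 2 ≤ j → j ≤ n → ∀ t ∈ U, a j t = (t : ℂ) ^ j * b j t)
    (hbcont : ∀ j, 2 ≤ j → j ≤ n → ContinuousOn (b j) U)
    (mu : Fin n → ℝ → ℂ) (hmucont : ∀ i, ContinuousOn (mu i) U)
    (hQ : ∀ t ∈ U, ∀ z : ℂ,
      z ^ n + ∑ j ∈ Finset.Icc 2 n, (-1 : ℂ) ^ j * b j t * z ^ (n - j)
        = ∏ i : Fin n, (z - mu i t)) :
    (∀ i, ContinuousOn (fun t : ℝ => (t : ℂ) * mu i t) U) ∧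
    (∀ t ∈ U, ∀ z : ℂ,
      z ^ n + ∑ j ∈ Finset.Icc 2 n, (-1 : ℂ) ^ j * a j t * z ^ (n - j)
        = ∏ i : Fin n, (z - (t : ℂ) * mu i t)) ∧
    (∀ i, HasDerivAt (fun t : ℝ => (t : ℂ) * mu i t) (mu i 0) 0) :=
  stmt14_general n U hU a b hab mu hmucont hQ
end
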